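/- arXiv:1605.05398 — 4 statements merged into one kernel-verified Lean document; each statement's English description precedes it below -/
import Mathlib

section
/- Let O be the ring of integers of a number field, I ⊆ O a nonzero ideal, and A = (a b; c d) ∈ SL₂(O) a matrix congruent to the identity modulo I (i.e. a-1, b, c, d-1 ∈ I). Write x₀ = (a+d)/2, x₁ = (a-d)/2, x₂ = (b+c)/2, x₃ = (b-c)/2 and y₀ = x₀ - 1, all elements of the field K. Then y₀ lies in the fractional ideal I²/8. -/
open Matrix MatrixGroups

namespace Matrix.SpecialLinearGroup

variable {R : Type*} [CommRing R]

/-- The identity `x₀² - x₁² - x₂² + x₃² = det A = 1`, rearranged around the identity matrix. -/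
theorem fin_two_trace_sub_two (A : SL(2, R)) :
    A.1 0 0 + A.1 1 1 - 2 = A.1 0 1 * A.1 1 0 - (A.1 0 0 - 1) * (A.1 1 1 - 1) := by
  have hdet : A.1 0 0 * A.1 1 1 - A.1 0 1 * A.1 1 0 = 1 := by
    simpa only [Matrix.det_fin_two] using A.2
  linear_combination hdet

theorem fin_two_trace_sub_two_mem_sq {I : Ideal R} (A : SL(2, R))
    (ha : A.1 0 0 - 1 ∈ I) (hb : A.1 0 1 ∈ I) (hc : A.1 1 0 ∈ I) (hd : A.1 1 1 - 1 ∈ I) :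
    A.1 0 0 + A.1 1 1 - 2 ∈ I ^ 2 := by
  rw [fin_two_trace_sub_two, sq]
  exact sub_mem (Ideal.mul_mem_mul hb hc) (Ideal.mul_mem_mul ha hd)

end Matrix.SpecialLinearGroup

theorem stmt0_general (K : Type*) [Field K] [NumberField K]
    (I : Ideal (NumberField.RingOfIntegers K))
    (A : SL(2, NumberField.RingOfIntegers K))
    (ha : A.1 0 0 - 1 ∈ I) (hb : A.1 0 1 ∈ I) (hc : A.1 1 0 ∈ I) (hd : A.1 1 1 - 1 ∈ I) :
    ∃ w ∈ I ^ 2,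
      (algebraMap (NumberField.RingOfIntegers K) K (A.1 0 0) +
          algebraMap (NumberField.RingOfIntegers K) K (A.1 1 1)) / 2 - 1 =
        algebraMap (NumberField.RingOfIntegers K) K w / 8 := by
  refine ⟨4 * (A.1 0 0 + A.1 1 1 - 2),
    Ideal.mul_mem_left _ 4 (A.fin_two_trace_sub_two_mem_sq ha hb hc hd), ?_⟩
  simp only [map_mul, map_add, map_sub, map_ofNat]
  ring

/-- If `A ∈ SL₂(𝓞 K)` is congruent to the identity modulo a nonzero ideal `I`
(i.e. `a-1, b, c, d-1 ∈ I`), then `y₀ = (a+d)/2 - 1` lies in the fractional ideal `I²/8`. -/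
theorem stmt0 (K : Type*) [Field K] [NumberField K]
    (I : Ideal (NumberField.RingOfIntegers K)) (hI : I ≠ ⊥)
    (A : SL(2, NumberField.RingOfIntegers K))
    (ha : A.1 0 0 - 1 ∈ I) (hb : A.1 0 1 ∈ I) (hc : A.1 1 0 ∈ I) (hd : A.1 1 1 - 1 ∈ I) :
    ∃ w ∈ I ^ 2,
      (algebraMap (NumberField.RingOfIntegers K) K (A.1 0 0) +
          algebraMap (NumberField.RingOfIntegers K) K (A.1 1 1)) / 2 - 1 =
        algebraMap (NumberField.RingOfIntegers K) K w / 8 :=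
  stmt0_general K I A ha hb hc hd
end

section
/- Let K be a totally real number field of degree n with embeddings σ₁,…,σₙ : K → ℝ, O its ring of integers, and I ⊆ O a nonzero ideal. Let A ∈ SL₂(O) be congruent to the identity modulo I, with y₀ = (tr(A) - 2)/2 ≠ 0. Then there exists j ∈ {1,…,n} such that |tr(σⱼ(A))| ≥ N(I)^{2/n}/4 - 2. -/
/-!
Writing `A = [[a, b], [c, d]]`, the relation `ad - bc = 1` gives `tr A - 2 = bc - (a - 1)(d - 1)`,
which lies in `I²` when `A ≡ 1 mod I`. A nonzero element of `I²` has norm at least `N(I)²`, and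
in a totally real field of degree `n` this norm is the product of the `n` real conjugates, so one
conjugate `σⱼ(tr A - 2) = tr σⱼ(A) - 2` has absolute value at least `N(I)^{2/n}`.
-/
open Matrix MatrixGroups

theorem Matrix.SpecialLinearGroup.trace_sub_two_mem_sq_of_mem_ker {R : Type*} [CommRing R]
    {I : Ideal R} {A : SL(2, R)}
    (hA : A ∈ (SpecialLinearGroup.map (Ideal.Quotient.mk I)).ker) :
    A.1.trace - 2 ∈ I ^ 2 := by
  have hent (i j : Fin 2) : A i j - (1 : Matrix (Fin 2) (Fin 2) R) i j ∈ I := by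
    have := congr_fun (congr_fun (congrArg Subtype.val hA) i) j
    rw [← Ideal.Quotient.eq]
    simpa [Matrix.one_apply, apply_ite] using this
  have hdet : A 0 0 * A 1 1 - A 0 1 * A 1 0 = 1 := by rw [← det_fin_two]; exact A.2
  have htr : A.1.trace - 2 = A 0 1 * A 1 0 - (A 0 0 - 1) * (A 1 1 - 1) := by
    rw [trace_fin_two]; linear_combination hdet
  rw [htr, pow_two]
  exact sub_mem (Ideal.mul_mem_mul (by simpa using hent 0 1) (by simpa using hent 1 0))
    (Ideal.mul_mem_mul (by simpa using hent 0 0) (by simpa using hent 1 1))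

theorem NumberField.prod_norm_complexEmbedding_eq_abs_norm {K : Type*} [Field K] [NumberField K]
    (x : K) : ∏ φ : K →+* ℂ, ‖φ x‖ = |(Algebra.norm ℚ x : ℝ)| := by
  calc ∏ φ : K →+* ℂ, ‖φ x‖ = ∏ ψ : K →ₐ[ℚ] ℂ, ‖ψ x‖ :=
        Fintype.prod_equiv (RingHom.equivRatAlgHom K ℂ) _ _
          fun _ => by simp [RingHom.equivRatAlgHom_apply]
    _ = |(Algebra.norm ℚ x : ℝ)| := by
        rw [← norm_prod, ← Algebra.norm_eq_prod_embeddings, eq_ratCast, ← Complex.ofReal_ratCast,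
          Complex.norm_real, Real.norm_eq_abs]

theorem NumberField.prod_abs_realEmbedding_eq_abs_norm {K : Type*} [Field K] [NumberField K]
    (hK : Fintype.card (K →+* ℝ) = Module.finrank ℚ K) (x : K) :
    ∏ φ : K →+* ℝ, |φ x| = |(Algebra.norm ℚ x : ℝ)| := by
  have hinj : Function.Injective fun φ : K →+* ℝ => Complex.ofRealHom.comp φ :=
    fun φ₁ φ₂ h => RingHom.ext fun y => Complex.ofReal_injective (RingHom.congr_fun h y)
  have hbij : Function.Bijective fun φ : K →+* ℝ => Complex.ofRealHom.comp φ :=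
    (Fintype.bijective_iff_injective_and_card _).mpr ⟨hinj, by rw [hK, Embeddings.card]⟩
  rw [← prod_norm_complexEmbedding_eq_abs_norm, ← hbij.prod_comp]
  simp

theorem Finset.exists_le_of_pow_card_le_prod {ι R : Type*} [Fintype ι] [Nonempty ι]
    [CommMonoidWithZero R] [LinearOrder R] [ZeroLEOneClass R] [PosMulStrictMono R] [Nontrivial R]
    {f : ι → R} (hf : ∀ i, 0 < f i) {c : R} (h : c ^ Fintype.card ι ≤ ∏ i, f i) :
    ∃ i, c ≤ f i := by
  contrapose! h
  simpa using Finset.prod_lt_prod_of_nonempty (fun i _ => hf i) (fun i _ => h i) univ_nonempty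

open NumberField in
theorem NumberField.exists_absNorm_rpow_le_abs_realEmbedding {K : Type*} [Field K]
    [NumberField K] (hK : Fintype.card (K →+* ℝ) = Module.finrank ℚ K)
    {J : Ideal (𝓞 K)} {x : 𝓞 K} (hxJ : x ∈ J) (hx : x ≠ 0) :
    ∃ φ : K →+* ℝ, (Ideal.absNorm J : ℝ) ^ ((Module.finrank ℚ K : ℝ)⁻¹) ≤ |φ x| := by
  have hnorm : (Ideal.absNorm J : ℝ) ≤ |(Algebra.norm ℚ (x : K) : ℝ)| := by
    have hdvd := Ideal.absNorm_dvd_norm_of_mem hxJ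
    have h0 : Algebra.norm ℤ x ≠ 0 := Algebra.norm_ne_zero_iff.mpr hx
    rw [← Algebra.coe_norm_int, Rat.cast_intCast, ← Int.cast_abs, ← Int.cast_natCast]
    exact_mod_cast Int.le_of_dvd (abs_pos.mpr h0) ((dvd_abs _ _).mpr hdvd)
  have : Nonempty (K →+* ℝ) := Fintype.card_pos_iff.mp (hK ▸ Module.finrank_pos)
  refine Finset.exists_le_of_pow_card_le_prod (fun φ => ?_) ?_
  · simpa using hx
  · rw [hK, Real.rpow_inv_natCast_pow (by positivity) Module.finrank_pos.ne',
      prod_abs_realEmbedding_eq_abs_norm hK]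
    exact hnorm

theorem stmt2_general (K : Type*) [Field K] [NumberField K]
    (n : ℕ) (hn : n = Module.finrank ℚ K)
    (σ : Fin n ≃ (K →+* ℝ))
    (I : Ideal (NumberField.RingOfIntegers K))
    (A : SL(2, NumberField.RingOfIntegers K))
    (hA : A ∈ (Matrix.SpecialLinearGroup.map (Ideal.Quotient.mk I)).ker)
    (hy₀ : (algebraMap (NumberField.RingOfIntegers K) K (Matrix.trace A.1) - 2) / 2 ≠ 0) :
    ∃ j : Fin n,
      |Matrix.trace (A.1.map ((σ j).comp
          (algebraMap (NumberField.RingOfIntegers K) K)))| ≥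
        (Ideal.absNorm I : ℝ) ^ ((2 : ℝ) / n) / 4 - 2 := by
  subst hn
  have hK : Fintype.card (K →+* ℝ) = Module.finrank ℚ K := by simp [← Fintype.card_congr σ]
  have hx : A.1.trace - 2 ≠ 0 := fun h => hy₀ <| by rw [sub_eq_zero.mp h, map_ofNat]; norm_num
  obtain ⟨φ, hφ⟩ := NumberField.exists_absNorm_rpow_le_abs_realEmbedding hK
    (SpecialLinearGroup.trace_sub_two_mem_sq_of_mem_ker hA) hx
  refine ⟨σ.symm φ, ?_⟩
  have hc : (Ideal.absNorm (I ^ 2) : ℝ) ^ ((Module.finrank ℚ K : ℝ)⁻¹) =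
      (Ideal.absNorm I : ℝ) ^ ((2 : ℝ) / Module.finrank ℚ K) := by
    rw [map_pow, Nat.cast_pow, ← Real.rpow_natCast_mul (by positivity), div_eq_mul_inv]
    norm_num
  have htr : (A.1.map (φ.comp (algebraMap _ K))).trace = φ (A.1.trace - 2 : _) + 2 := by
    rw [← AddMonoidHom.map_trace]; simp [map_ofNat]
  rw [Equiv.apply_symm_apply, htr, ge_iff_le]
  calc (Ideal.absNorm I : ℝ) ^ ((2 : ℝ) / Module.finrank ℚ K) / 4 - 2
      ≤ (Ideal.absNorm I : ℝ) ^ ((2 : ℝ) / Module.finrank ℚ K) - 2 := by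
        linarith [show 0 ≤ (Ideal.absNorm I : ℝ) ^ ((2 : ℝ) / Module.finrank ℚ K) by positivity]
    _ ≤ |φ (A.1.trace - 2 : _)| - 2 := by linarith [hc ▸ hφ]
    _ ≤ |φ (A.1.trace - 2 : _) + 2| := by
        simpa using abs_sub_abs_le_abs_sub (φ (A.1.trace - 2 : _)) (-2)

/-- If `A ∈ Γ(I)` has `y₀ = (tr A - 2)/2 ≠ 0`, then some real embedding `σⱼ` satisfies
`|tr(σⱼ(A))| ≥ N(I)^{2/n}/4 - 2`. -/
theorem stmt2 (K : Type*) [Field K] [NumberField K]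
    (n : ℕ) (hn : n = Module.finrank ℚ K)
    (σ : Fin n ≃ (K →+* ℝ))
    (I : Ideal (NumberField.RingOfIntegers K)) (hI : I ≠ ⊥)
    (A : SL(2, NumberField.RingOfIntegers K))
    (hA : A ∈ (Matrix.SpecialLinearGroup.map (Ideal.Quotient.mk I)).ker)
    (hy₀ : (algebraMap (NumberField.RingOfIntegers K) K (Matrix.trace A.1) - 2) / 2 ≠ 0) :
    ∃ j : Fin n,
      |Matrix.trace (A.1.map ((σ j).comp
          (algebraMap (NumberField.RingOfIntegers K) K)))| ≥
        (Ideal.absNorm I : ℝ) ^ ((2 : ℝ) / n) / 4 - 2 :=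
  stmt2_general K n hn σ I A hA hy₀
end

section
/- Let O be the ring of integers of a number field, I ⊆ O an ideal with N(I) > 2, and r the least positive rational integer in I. For distinct m, k ∈ {1, …, r}, the matrices A_m = (1−m², m; −m, 1) and A_k = (1−k², k; −k, 1) in SL₂(O) lie in distinct cosets of Γ(I). Consequently [SL₂(O) : Γ(I)] ≥ r ≥ N(I)^{1/n}, where n is the degree of the field. -/
/-! The `(1,2)` entry of `A_m` is `m`, so `A_m ≡ A_k (mod I)` forces `m - k ∈ I`, impossible for
`0 < |m - k| < r` by minimality of `r`. This gives `r` distinct cosets. Since `r ∈ I`, the ideal `I`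
divides `(r)`, whose norm is `r ^ n`, so `N(I) ≤ r ^ n`. -/

open Matrix MatrixGroups

theorem Ideal.Quotient.mk_natCast_ne_of_isLeast {R : Type*} [CommRing R] {I : Ideal R} {r : ℕ}
    (hr : IsLeast {k : ℕ | 0 < k ∧ (k : R) ∈ I} r) {m k : ℕ}
    (hm : m ∈ Finset.Icc 1 r) (hk : k ∈ Finset.Icc 1 r) (hmk : m ≠ k) :
    Ideal.Quotient.mk I (m : R) ≠ Ideal.Quotient.mk I (k : R) := by
  wlog hlt : k < m generalizing m k
  · exact (this hk hm hmk.symm (by omega)).symm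
  rw [Finset.mem_Icc] at hm hk
  intro h
  have hmem : ((m - k : ℕ) : R) ∈ I := by
    rw [Nat.cast_sub hlt.le]
    exact Ideal.Quotient.eq.mp h
  have := hr.2 ⟨Nat.sub_pos_of_lt hlt, hmem⟩
  omega

theorem Subgroup.card_le_index_of_injOn {G α : Type*} [Group G] {H : Subgroup G} [H.FiniteIndex]
    {s : Finset α} {f : α → G ⧸ H} (hf : Set.InjOn f s) : s.card ≤ H.index := by
  have := Fintype.ofFinite (G ⧸ H)
  rw [Subgroup.index, Nat.card_eq_fintype_card]
  exact Finset.card_le_card_of_injOn f (fun _ _ => Finset.mem_univ _) hf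

theorem Ideal.absNorm_dvd_pow_finrank_of_natCast_mem {S : Type*} [CommRing S] [IsDedekindDomain S]
    [Module.Free ℤ S] [Module.Finite ℤ S] {I : Ideal S} {r : ℕ} (h : (r : S) ∈ I) :
    I.absNorm ∣ r ^ Module.finrank ℤ S := by
  rw [← Ideal.absNorm_span_natCast]
  exact Ideal.absNorm_dvd_absNorm_of_le ((Ideal.span_singleton_le_iff_mem I).mpr h)

theorem Real.rpow_one_div_le_of_le_pow {x y : ℝ} {n : ℕ} (hx : 0 ≤ x) (hy : 0 ≤ y) (hn : 0 < n)
    (h : x ≤ y ^ n) : x ^ ((1 : ℝ) / n) ≤ y := by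
  rw [one_div, Real.rpow_inv_le_iff_of_pos hx hy (by positivity), Real.rpow_natCast]
  exact h

namespace Matrix.SpecialLinearGroup

variable {R : Type*} [CommRing R]

/-- The product `!![1, m; 0, 1] * !![1, 0; -m, 1]`. -/
def shearProd (m : R) : SL(2, R) :=
  ⟨!![1 - m ^ 2, m; -m, 1], by simp [det_fin_two_of]; ring⟩

theorem map_eq_of_mk_ker_eq {S : Type*} [CommRing S] (f : R →+* S) {A B : SL(2, R)}
    (h : (A : SL(2, R) ⧸ (map f).ker) = B) : map f A = map f B := by
  rwa [QuotientGroup.eq, MonoidHom.mem_ker, map_mul, map_inv, inv_mul_eq_one] at h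

theorem injOn_mk_ker_shearProd {I : Ideal R} {r : ℕ}
    (hr : IsLeast {k : ℕ | 0 < k ∧ (k : R) ∈ I} r) :
    Set.InjOn (fun m : ℕ => (shearProd (m : R) : SL(2, R) ⧸ (map (Ideal.Quotient.mk I)).ker))
      (Finset.Icc 1 r) := by
  intro m hm k hk h
  by_contra hmk
  have hentry := congrArg (fun A : SL(2, R ⧸ I) => A 0 1) (map_eq_of_mk_ker_eq _ h)
  exact Ideal.Quotient.mk_natCast_ne_of_isLeast hr hm hk hmk hentry

end Matrix.SpecialLinearGroup

open Matrix.SpecialLinearGroup in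
theorem stmt11_general (K : Type*) [Field K] [NumberField K]
    (n : ℕ) (hn : n = Module.finrank ℚ K)
    (I : Ideal (NumberField.RingOfIntegers K))
    (r : ℕ) (hr : IsLeast {k : ℕ | 0 < k ∧ (k : NumberField.RingOfIntegers K) ∈ I} r) :
    (∀ m k : ℕ, m ∈ Finset.Icc 1 r → k ∈ Finset.Icc 1 r → m ≠ k →
      ∀ A B : SL(2, NumberField.RingOfIntegers K),
        A.1 = !![1 - (m : NumberField.RingOfIntegers K) ^ 2, (m : NumberField.RingOfIntegers K);
                 -(m : NumberField.RingOfIntegers K), 1] →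
        B.1 = !![1 - (k : NumberField.RingOfIntegers K) ^ 2, (k : NumberField.RingOfIntegers K);
                 -(k : NumberField.RingOfIntegers K), 1] →
        QuotientGroup.mk (s := (Matrix.SpecialLinearGroup.map (Ideal.Quotient.mk I)).ker) A ≠
          QuotientGroup.mk B) ∧
    (Matrix.SpecialLinearGroup.map (n := Fin 2) (Ideal.Quotient.mk I)).ker.index ≥ r ∧
    (r : ℝ) ≥ (Ideal.absNorm I : ℝ) ^ ((1 : ℝ) / n) := by
  have hdvd : I.absNorm ∣ r ^ n := by
    simpa [hn, NumberField.RingOfIntegers.rank] using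
      Ideal.absNorm_dvd_pow_finrank_of_natCast_mem hr.1.2
  have hpow_pos : 0 < r ^ n := pow_pos hr.1.1 n
  have : Finite (NumberField.RingOfIntegers K ⧸ I) :=
    (Ideal.absNorm_ne_zero_iff I).mp (ne_zero_of_dvd_ne_zero hpow_pos.ne' hdvd)
  refine ⟨?_, ?_, ?_⟩
  · rintro m k hm hk hmk A B hA hB
    obtain rfl : A = shearProd (m : NumberField.RingOfIntegers K) := Subtype.ext hA
    obtain rfl : B = shearProd (k : NumberField.RingOfIntegers K) := Subtype.ext hB
    exact fun h => hmk (injOn_mk_ker_shearProd hr hm hk h)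
  · simpa using Subgroup.card_le_index_of_injOn (injOn_mk_ker_shearProd hr)
  · have hn0 : 0 < n := hn ▸ Module.finrank_pos
    exact Real.rpow_one_div_le_of_le_pow (by positivity) (by positivity) hn0
      (by exact_mod_cast Nat.le_of_dvd hpow_pos hdvd)

/-- For `N(I) > 2` and `r` the least positive rational integer in `I`, the matrices
`A_m = (1−m², m; −m, 1)`, `m = 1, …, r`, lie in pairwise distinct cosets of `Γ(I)`;
consequently `[SL₂(O) : Γ(I)] ≥ r ≥ N(I)^{1/n}`. -/
theorem stmt11 (K : Type*) [Field K] [NumberField K]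
    (n : ℕ) (hn : n = Module.finrank ℚ K)
    (I : Ideal (NumberField.RingOfIntegers K)) (hI : Ideal.absNorm I > 2)
    (r : ℕ) (hr : IsLeast {k : ℕ | 0 < k ∧ (k : NumberField.RingOfIntegers K) ∈ I} r) :
    (∀ m k : ℕ, m ∈ Finset.Icc 1 r → k ∈ Finset.Icc 1 r → m ≠ k →
      ∀ A B : SL(2, NumberField.RingOfIntegers K),
        A.1 = !![1 - (m : NumberField.RingOfIntegers K) ^ 2, (m : NumberField.RingOfIntegers K);
                 -(m : NumberField.RingOfIntegers K), 1] →
        B.1 = !![1 - (k : NumberField.RingOfIntegers K) ^ 2, (k : NumberField.RingOfIntegers K);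
                 -(k : NumberField.RingOfIntegers K), 1] →
        QuotientGroup.mk (s := (Matrix.SpecialLinearGroup.map (Ideal.Quotient.mk I)).ker) A ≠
          QuotientGroup.mk B) ∧
    (Matrix.SpecialLinearGroup.map (n := Fin 2) (Ideal.Quotient.mk I)).ker.index ≥ r ∧
    (r : ℝ) ≥ (Ideal.absNorm I : ℝ) ^ ((1 : ℝ) / n) :=
  stmt11_general K n hn I r hr
end

section
/- Let K be a totally real number field of degree n with real embeddings σ₁,…,σₙ, O its ring of integers, and I ⊆ O an ideal with N(I) ≥ 40^{n/2}. Let A ∈ Γ(I) with y₀ = (tr(A)−2)/2 ≠ 0. Then for every z ∈ (ℍ²)ⁿ, d(z, Az) ≥ (4/√n)·log(N(I)) − 2√n·log(40). -/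
/-!
Put `x = tr A - 2`. Since `A ≡ 1 mod I` and `det A = 1`, we have
`x = A₀₁ A₁₀ - (A₀₀ - 1)(A₁₁ - 1) ∈ I²`, so `N(I)² ≤ |N(x)| = ∏ᵢ |σᵢ x|` as `x ≠ 0` and `K` is
totally real. On the other hand, for `g ∈ SL₂(ℝ)` the displacement `d = d(z, gz)` satisfies
`|tr g| ≤ 2 cosh (d / 2)`, because `cosh d = 1 + |c z² + (d' - a) z - b|² / (2 (Im z)²)` for
`g = (a, b; c, d')` and that quadratic has discriminant `(tr g)² - 4`. Hence
`|σᵢ x| ≤ 4 exp (dᵢ / 2)`. Taking logarithms gives `4 log N(I) - 2n log 4 ≤ ∑ᵢ dᵢ`, and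
Cauchy–Schwarz bounds `∑ᵢ dᵢ` by `√n (∑ᵢ dᵢ²)^{1/2}`.
-/

open Matrix MatrixGroups NumberField

open Complex in
theorem Complex.discr_mul_im_sq_le_normSq (a b c d : ℝ) (z : ℂ) :
    ((a + d) ^ 2 - 4 * (a * d - b * c)) * z.im ^ 2 ≤ normSq (c * z ^ 2 + (d - a) * z - b) := by
  have key : normSq (c * z ^ 2 + (d - a) * z - b) =
      (c * normSq z + (d - a) * z.re - b) ^ 2 +
        ((a + d) ^ 2 - 4 * (a * d - b * c)) * z.im ^ 2 := by
    simp only [normSq_apply, pow_two, sub_re, add_re, mul_re, sub_im, add_im, mul_im,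
      ofReal_re, ofReal_im]
    ring
  rw [key]
  exact le_add_of_nonneg_left (sq_nonneg _)

theorem Matrix.SpecialLinearGroup.trace_map_coe {R S : Type*} [CommRing R] [CommRing S]
    {n : Type*} [Fintype n] [DecidableEq n] (f : R →+* S) (A : SpecialLinearGroup n R) :
    trace (map f A).1 = f (trace A.1) :=
  (AddMonoidHom.map_trace f A.1).symm

namespace UpperHalfPlane

theorem cosh_dist_smul (g : SL(2, ℝ)) (z : ℍ) :
    Real.cosh (dist z (g • z)) =
      1 + Complex.normSq (g 1 0 * (z : ℂ) ^ 2 + (g 1 1 - g 0 0) * z - g 0 1) / (2 * z.im ^ 2) := by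
  have hsmul : g • z = SpecialLinearGroup.mapGL ℝ g • z := MulAction.compHom_smul_def _ _ _
  have hdenom : denom (SpecialLinearGroup.mapGL ℝ g) z = g 1 0 * z + g 1 1 := by simp [denom]
  have hdenom0 : (g 1 0 * z + g 1 1 : ℂ) ≠ 0 := hdenom ▸ denom_ne_zero _ z
  have him : (g • z).im = z.im / Complex.normSq (g 1 0 * z + g 1 1) := by
    rw [hsmul, im_smul_eq_div_normSq, hdenom]
    simp
  have hsub : (z : ℂ) - (g • z : ℍ) =
      (g 1 0 * (z : ℂ) ^ 2 + (g 1 1 - g 0 0) * z - g 0 1) / (g 1 0 * z + g 1 1) := by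
    rw [coe_specialLinearGroup_apply]
    simp only [Algebra.algebraMap_self, RingHom.id_apply]
    rw [eq_div_iff hdenom0, sub_mul, div_mul_cancel₀ _ hdenom0]
    ring
  rw [cosh_dist, Complex.dist_eq, ← Complex.normSq_eq_norm_sq, him, hsub, Complex.normSq_div]
  have := Complex.normSq_pos.2 hdenom0
  have := z.im_pos
  field_simp

theorem abs_trace_le_two_mul_cosh_half_dist (g : SL(2, ℝ)) (z : ℍ) :
    |trace g.1| ≤ 2 * Real.cosh (dist z (g • z) / 2) := by
  set d := dist z (g • z)
  have hdet : g 0 0 * g 1 1 - g 0 1 * g 1 0 = 1 := by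
    simpa only [det_fin_two] using g.det_coe
  have hdiscr : (trace g.1 ^ 2 - 4) * z.im ^ 2 ≤
      Complex.normSq (g 1 0 * (z : ℂ) ^ 2 + (g 1 1 - g 0 0) * z - g 0 1) := by
    simpa only [trace_fin_two, hdet, mul_one, coe_im] using
      Complex.discr_mul_im_sq_le_normSq (g 0 0) (g 0 1) (g 1 0) (g 1 1) z
  have hcosh : trace g.1 ^ 2 / 2 - 1 ≤ Real.cosh d := by
    rw [cosh_dist_smul, ← sub_le_iff_le_add', le_div_iff₀ (by positivity [z.im_pos])]
    linarith
  have hhalf : Real.cosh d = 2 * Real.cosh (d / 2) ^ 2 - 1 := by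
    have h := Real.cosh_two_mul (d / 2)
    rw [mul_div_cancel₀ d two_ne_zero] at h
    linear_combination h - Real.cosh_sq (d / 2)
  refine abs_le_of_sq_le_sq ?_ (by positivity)
  nlinarith

theorem abs_trace_sub_two_le_four_mul_exp_half_dist (g : SL(2, ℝ)) (z : ℍ) :
    |trace g.1 - 2| ≤ 4 * Real.exp (dist z (g • z) / 2) := by
  set u := dist z (g • z) / 2
  have hcosh_le_exp : Real.cosh u ≤ Real.exp u := by
    have hu : 0 ≤ u := by positivity
    rw [Real.cosh_eq]
    linarith [Real.exp_le_exp.2 (show -u ≤ u by linarith)]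
  calc |trace g.1 - 2| ≤ |trace g.1| + 2 := by simpa using abs_sub (trace g.1) 2
    _ ≤ 2 * Real.cosh u + 2 * Real.cosh u := by
      linarith [abs_trace_le_two_mul_cosh_half_dist g z, Real.one_le_cosh u]
    _ ≤ 4 * Real.exp u := by linarith

theorem abs_map_trace_sub_two_le_four_mul_exp_half_dist {R : Type*} [CommRing R] (f : R →+* ℝ)
    (A : SL(2, R)) (z : ℍ) :
    |f (trace A.1 - 2)| ≤ 4 * Real.exp (dist z (SpecialLinearGroup.map f A • z) / 2) := by
  rw [map_sub, map_ofNat, ← SpecialLinearGroup.trace_map_coe]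
  exact abs_trace_sub_two_le_four_mul_exp_half_dist _ z

end UpperHalfPlane

namespace Matrix.SpecialLinearGroup

variable {R : Type*} [CommRing R] {I : Ideal R}

theorem sub_one_apply_mem_of_mem_ker {n : Type*} [Fintype n] [DecidableEq n]
    {A : SpecialLinearGroup n R} (hA : A ∈ (map (Ideal.Quotient.mk I)).ker) (i j : n) :
    A i j - (1 : Matrix n n R) i j ∈ I := by
  rw [← Ideal.Quotient.eq]
  simpa [one_apply, apply_ite] using congr_fun₂ (congrArg Subtype.val hA) i j

theorem trace_sub_two_mem_sq_of_mem_ker_s16 {A : SL(2, R)}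
    (hA : A ∈ (map (Ideal.Quotient.mk I)).ker) : trace A.1 - 2 ∈ I ^ 2 := by
  have h00 : A 0 0 - 1 ∈ I := by simpa using sub_one_apply_mem_of_mem_ker hA 0 0
  have h11 : A 1 1 - 1 ∈ I := by simpa using sub_one_apply_mem_of_mem_ker hA 1 1
  have h01 : A 0 1 ∈ I := by simpa using sub_one_apply_mem_of_mem_ker hA 0 1
  have h10 : A 1 0 ∈ I := by simpa using sub_one_apply_mem_of_mem_ker hA 1 0
  have htrace : trace A.1 - 2 = A 0 1 * A 1 0 - (A 0 0 - 1) * (A 1 1 - 1) := by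
    rw [trace_fin_two]
    linear_combination (det_fin_two A.1).symm.trans A.det_coe
  rw [htrace, sq]
  exact sub_mem (Ideal.mul_mem_mul h01 h10) (Ideal.mul_mem_mul h00 h11)

end Matrix.SpecialLinearGroup

theorem Ideal.absNorm_le_natAbs_norm_of_mem {S : Type*} [CommRing S] [IsDedekindDomain S]
    [Module.Free ℤ S] [Module.Finite ℤ S] {I : Ideal S} {x : S} (hx : x ∈ I) (hx0 : x ≠ 0) :
    absNorm I ≤ (Algebra.norm ℤ x).natAbs :=
  Nat.le_of_dvd (Int.natAbs_pos.2 (Algebra.norm_ne_zero_iff.2 hx0))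
    (Int.natCast_dvd.1 (absNorm_dvd_norm_of_mem hx))

namespace NumberField

variable {K : Type*} [Field K] [NumberField K]

theorem prod_abs_apply_eq_abs_norm (hK : Fintype.card (K →+* ℝ) = Module.finrank ℚ K) (x : K) :
    ∏ φ : K →+* ℝ, |φ x| = |(Algebra.norm ℚ x : ℝ)| := by
  let f : (K →+* ℝ) → (K →+* ℂ) := Complex.ofRealHom.comp
  have hf : Function.Bijective f := (Fintype.bijective_iff_injective_and_card f).2
    ⟨fun _ _ => (RingHom.cancel_left Complex.ofReal_injective).1,
      hK.trans (Embeddings.card K ℂ).symm⟩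
  calc ∏ φ : K →+* ℝ, |φ x| = ∏ ψ : K →+* ℂ, ‖ψ x‖ :=
        Fintype.prod_bijective f hf _ _ fun φ => by simp [f]
    _ = ‖∏ ψ : K →ₐ[ℚ] ℂ, ψ x‖ := by
        rw [← norm_prod, ← Fintype.prod_equiv (RingHom.equivRatAlgHom K ℂ) (fun ψ => ψ x)]
        simp [RingHom.equivRatAlgHom_apply]
    _ = |(Algebra.norm ℚ x : ℝ)| := by
        rw [← Algebra.norm_eq_prod_embeddings, eq_ratCast, Complex.norm_ratCast]

theorem absNorm_le_prod_abs_apply_of_mem (hK : Fintype.card (K →+* ℝ) = Module.finrank ℚ K)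
    {I : Ideal (𝓞 K)} {x : 𝓞 K} (hx : x ∈ I) (hx0 : x ≠ 0) :
    (Ideal.absNorm I : ℝ) ≤ ∏ φ : K →+* ℝ, |φ x| := by
  rw [prod_abs_apply_eq_abs_norm hK, ← Algebra.coe_norm_int, Rat.cast_intCast, ← Int.cast_abs,
    Int.abs_eq_natAbs]
  exact_mod_cast Ideal.absNorm_le_natAbs_norm_of_mem hx hx0

end NumberField

theorem Finset.sum_le_sqrt_card_mul_sqrt_sum_sq {ι : Type*} (s : Finset ι) (f : ι → ℝ) :
    ∑ i ∈ s, f i ≤ √(s.card : ℝ) * √(∑ i ∈ s, f i ^ 2) := by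
  rw [← Real.sqrt_mul (Nat.cast_nonneg _)]
  exact (le_abs_self _).trans (Real.abs_le_sqrt (sq_sum_le_card_mul_sum_sq ..))

theorem le_sqrt_sum_sq_of_sq_le_prod_mul_exp {n : ℕ} (hn : 0 < n) {N c : ℝ} (hN : 0 < N)
    (hc : 0 < c) (d : Fin n → ℝ) (h : N ^ 2 ≤ ∏ i, c * Real.exp (d i / 2)) :
    4 / √n * Real.log N - 2 * √n * Real.log c ≤ √(∑ i, d i ^ 2) := by
  rw [Finset.prod_mul_distrib, Finset.prod_const, Finset.card_univ, Fintype.card_fin,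
    ← Real.exp_sum, ← Finset.sum_div] at h
  have hlog := Real.log_le_log (by positivity) h
  rw [Real.log_pow, Real.log_mul (by positivity) (by positivity), Real.log_pow,
    Real.log_exp] at hlog
  have hcs := Finset.sum_le_sqrt_card_mul_sqrt_sum_sq Finset.univ d
  rw [Finset.card_univ, Fintype.card_fin] at hcs
  have hn0 : 0 < √(n : ℝ) := Real.sqrt_pos.2 (Nat.cast_pos.2 hn)
  rw [← mul_le_mul_iff_of_pos_left hn0]
  calc √(n : ℝ) * (4 / √n * Real.log N - 2 * √n * Real.log c)
      = 4 * Real.log N - 2 * n * Real.log c := by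
        field_simp
        rw [Real.sq_sqrt n.cast_nonneg]
        ring
    _ ≤ √n * √(∑ i, d i ^ 2) := by linarith

theorem stmt16_general (K : Type*) [Field K] [NumberField K]
    (n : ℕ) (hn : n = Module.finrank ℚ K)
    (σ : Fin n ≃ (K →+* ℝ))
    (I : Ideal (NumberField.RingOfIntegers K))
    (A : SL(2, NumberField.RingOfIntegers K))
    (hA : A ∈ (Matrix.SpecialLinearGroup.map (Ideal.Quotient.mk I)).ker)
    (hy₀ : (algebraMap (NumberField.RingOfIntegers K) K (Matrix.trace A.1) - 2) / 2 ≠ 0) :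
    ∀ z : Fin n → UpperHalfPlane,
      Real.sqrt (∑ i, (dist (z i)
          ((Matrix.SpecialLinearGroup.map
            ((σ i).comp (algebraMap (NumberField.RingOfIntegers K) K)) A) • z i)) ^ 2) ≥
        (4 / Real.sqrt n) * Real.log (Ideal.absNorm I) - 2 * Real.sqrt n * Real.log 40 := by
  intro z
  set x : 𝓞 K := trace A.1 - 2
  have hx0 : x ≠ 0 := fun hx => hy₀ <| by
    rw [← map_ofNat (algebraMap (𝓞 K) K) 2, ← map_sub, show trace A.1 - 2 = 0 from hx]
    simp
  have hxI : x ∈ I ^ 2 := SpecialLinearGroup.trace_sub_two_mem_sq_of_mem_ker_s16 hA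
  have hI0 : 0 < (Ideal.absNorm I : ℝ) := Nat.cast_pos.2 <| Nat.pos_of_ne_zero <|
    Ideal.absNorm_eq_zero_iff.not.2 <|
      (Submodule.ne_bot_iff _).2 ⟨x, Ideal.pow_le_self two_ne_zero hxI, hx0⟩
  have hcard : Fintype.card (K →+* ℝ) = Module.finrank ℚ K := by
    rw [← Fintype.card_congr σ, Fintype.card_fin, hn]
  have hnorm : (Ideal.absNorm I : ℝ) ^ 2 ≤ ∏ i, |σ i x| := by
    have h := absNorm_le_prod_abs_apply_of_mem hcard hxI hx0
    rwa [map_pow, Nat.cast_pow, ← Equiv.prod_comp σ] at h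
  calc 4 / √n * Real.log (Ideal.absNorm I) - 2 * √n * Real.log 40
      ≤ 4 / √n * Real.log (Ideal.absNorm I) - 2 * √n * Real.log 4 := by gcongr; norm_num
    _ ≤ _ := le_sqrt_sum_sq_of_sq_le_prod_mul_exp (hn ▸ Module.finrank_pos) hI0 four_pos _
        (hnorm.trans (Finset.prod_le_prod (fun i _ => abs_nonneg _) fun i _ =>
          UpperHalfPlane.abs_map_trace_sub_two_le_four_mul_exp_half_dist
            ((σ i).comp (algebraMap (𝓞 K) K)) A (z i)))

/-- If `N(I) ≥ 40^{n/2}` and `A ∈ Γ(I)` has `y₀ = (tr A − 2)/2 ≠ 0`, then for every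
`z ∈ (ℍ²)ⁿ`, `d(z, Az) ≥ (4/√n) log N(I) − 2√n log 40`. -/
theorem stmt16 (K : Type*) [Field K] [NumberField K]
    (n : ℕ) (hn : n = Module.finrank ℚ K)
    (σ : Fin n ≃ (K →+* ℝ))
    (I : Ideal (NumberField.RingOfIntegers K))
    (hI : (Ideal.absNorm I : ℝ) ≥ 40 ^ ((n : ℝ) / 2))
    (A : SL(2, NumberField.RingOfIntegers K))
    (hA : A ∈ (Matrix.SpecialLinearGroup.map (Ideal.Quotient.mk I)).ker)
    (hy₀ : (algebraMap (NumberField.RingOfIntegers K) K (Matrix.trace A.1) - 2) / 2 ≠ 0) :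
    ∀ z : Fin n → UpperHalfPlane,
      Real.sqrt (∑ i, (dist (z i)
          ((Matrix.SpecialLinearGroup.map
            ((σ i).comp (algebraMap (NumberField.RingOfIntegers K) K)) A) • z i)) ^ 2) ≥
        (4 / Real.sqrt n) * Real.log (Ideal.absNorm I) - 2 * Real.sqrt n * Real.log 40 :=
  stmt16_general K n hn σ I A hA hy₀
end
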